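/- Let G be a finite strongly connected directed graph and P, P' two probability distributions on environments (each environment an irreducible stochastic kernel supported on E). If for every vertex o and every finite path γ from o the annealed path probabilities agree, i.e., E_P[p(γ)] = E_{P'}[p(γ)], then P = P'. (The annealed law of the walk determines the law of the environment, since the environment can be recovered almost surely as the limit of empirical transition frequencies n_e(X_0,…,X_n)/n_{tail(e)}(X_0,…,X_n) as n → ∞.) -/

import Mathlib

open MeasureTheory ProbabilityTheory Filter

/-- Probability of following a finite path: product of transition probabilities. -/
def pathProb {V : Type*} (p : V → V → ℝ) : List V → ℝ
  | x :: y :: rest => p x y * pathProb p (y :: rest)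
  | _ => 1

/-- A list of vertices is a path in the edge set `E`. -/
def IsPathIn {V : Type*} (E : Finset (V × V)) : List V → Prop
  | x :: y :: rest => (x, y) ∈ E ∧ IsPathIn E (y :: rest)
  | _ => True

/-- `G = (V, E)` is strongly connected. -/
def StronglyConnected {V : Type*} (E : Finset (V × V)) : Prop :=
  ∀ x y : V, ∃ γ : List V, IsPathIn E γ ∧ γ.head? = some x ∧ γ.getLast? = some y

open scoped Classical in
/-- The Dirichlet distribution with parameters `w` (on the coordinates where `w ≠ 0`),
realized as normalized independent Gamma random variables. -/
noncomputable def siteDirichlet {ι : Type*} [Fintype ι] (w : ι → ℝ) : Measure (ι → ℝ) :=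
  (Measure.pi fun i : {i : ι // w i ≠ 0} => gammaMeasure (w i) 1).map
    fun g i => if h : w i ≠ 0 then g ⟨i, h⟩ / ∑ j, g j else 0

/-- Dirichlet distribution on environments: independent Dirichlet exit probabilities
at each vertex, with parameters `α x ·` at vertex `x`. -/
noncomputable def envDirichlet {V : Type*} [Fintype V] (α : V → V → ℝ) :
    Measure (V → V → ℝ) :=
  Measure.pi fun x => siteDirichlet (α x)

/-- The edge weights `α` are adapted to the edge set `E`:
positive on edges, zero off edges. -/
def AdaptedWeights {V : Type*} (E : Finset (V × V)) (α : V → V → ℝ) : Prop :=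
  ∀ x y, ((x, y) ∈ E → 0 < α x y) ∧ ((x, y) ∉ E → α x y = 0)

/-- ascending factorial `a (a+1) ⋯ (a+n-1)`. -/
noncomputable def ascFactorial (a : ℝ) (n : ℕ) : ℝ := ∏ j ∈ Finset.range n, (a + j)

/-- A valid environment on the graph `(V, E)`: nonnegative transition probabilities,
supported exactly on `E`, rows summing to `1`. -/
def ValidEnv {V : Type*} [Fintype V] (E : Finset (V × V)) (p : V → V → ℝ) : Prop :=
  (∀ x y, 0 < p x y ↔ (x, y) ∈ E) ∧ (∀ x y, (x, y) ∉ E → p x y = 0) ∧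
    (∀ x, ∑ y, p x y = 1)

/-!
Fix a base vertex `o`. Concatenating loops at `o` multiplies their probabilities, so under the
map `loopProbs` sending an environment to its vector of loop probabilities (a point of the compact
cube `[0, 1]^{loops}`), every monomial pulls back to a single loop probability. The annealed loop
probabilities therefore fix all moments of the pushforwards of `P` and `P'`, and these measures on
the cube agree by Stone–Weierstrass. On valid environments `loopProbs` is injective: with fixed
walks `o → x → o`, the loop probabilities determine `p` up to a Doob transform
`p' x y = p x y * t y / t x`, and a harmonic function of an irreducible chain is constant
(maximum principle). Lusin–Souslin then pulls the equality back to `P = P'`.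
-/

open Set
open scoped unitInterval BoundedContinuousFunction

theorem MeasureTheory.Measure.ext_of_map_eq_of_injOn {α β : Type*} [MeasurableSpace α]
    [StandardBorelSpace α] [MeasurableSpace β] [MeasurableSpace.CountablySeparated β]
    {f : α → β} (hf : Measurable f) {s : Set α} (hinj : InjOn f s) {μ ν : Measure α}
    (hμ : ∀ᵐ x ∂μ, x ∈ s) (hν : ∀ᵐ x ∂ν, x ∈ s) (h : μ.map f = ν.map f) :
    μ = ν := by
  obtain ⟨t, ht, htm, hts⟩ := Eventually.exists_measurable_mem
    (ae_add_measure_iff.2 ⟨hμ, hν⟩)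
  ext B hB
  have hBt : MeasurableSet (f '' (B ∩ t)) :=
    (hB.inter htm).image_of_measurable_injOn hf (hinj.mono fun x hx => hts x hx.2)
  have hpre : ∀ {m : Measure α}, t ∈ ae m → m B = m.map f (f '' (B ∩ t)) := by
    intro m hmt
    rw [Measure.map_apply hf hBt]
    refine measure_congr ?_
    filter_upwards [hmt] with x hx
    refine propext ⟨fun hxB => ⟨x, ⟨hxB, hx⟩, rfl⟩, ?_⟩
    rintro ⟨y, ⟨hyB, hy⟩, hyx⟩
    rwa [← hinj (hts y hy) (hts x hx) hyx]
  rw [hpre (ae_add_measure_iff.1 ht).1, hpre (ae_add_measure_iff.1 ht).2, h]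

theorem MeasureTheory.ext_of_forall_integral_list_prod_eq {ι : Type*} [Countable ι]
    {μ ν : Measure (ι → I)} [IsFiniteMeasure μ] [IsFiniteMeasure ν]
    (h : ∀ l : List ι, ∫ z, (l.map fun i => (z i : ℝ)).prod ∂μ =
      ∫ z, (l.map fun i => (z i : ℝ)).prod ∂ν) : μ = ν := by
  set coord : ι → ((ι → I) →ᵇ ℝ) := fun i =>
    BoundedContinuousFunction.mkOfCompact ⟨fun z => z i, by fun_prop⟩
  have hmonomial : ∀ g ∈ Submonoid.closure (range coord),
      ∃ l : List ι, ⇑g = fun z => (l.map fun i => (z i : ℝ)).prod := by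
    intro g hg
    induction hg using Submonoid.closure_induction with
    | mem g hg =>
      obtain ⟨i, rfl⟩ := hg
      exact ⟨[i], by ext; simp [coord]⟩
    | one => exact ⟨[], by ext; simp⟩
    | mul g₁ g₂ _ _ ih₁ ih₂ =>
      obtain ⟨l₁, hl₁⟩ := ih₁
      obtain ⟨l₂, hl₂⟩ := ih₂
      exact ⟨l₁ ++ l₂, by ext; simp [hl₁, hl₂]⟩
  refine ext_of_forall_mem_subalgebra_integral_eq_of_polish
    (A := StarAlgebra.adjoin ℝ (range coord)) ?_ fun g hg => ?_
  · intro z w hzw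
    obtain ⟨i, hi⟩ := Function.ne_iff.1 hzw
    exact ⟨coord i,
      ⟨_, ⟨coord i, StarAlgebra.subset_adjoin ℝ _ ⟨i, rfl⟩, rfl⟩, rfl⟩,
      fun h' => hi (Subtype.ext h')⟩
  · rw [← StarSubalgebra.mem_toSubalgebra, StarAlgebra.adjoin_toSubalgebra] at hg
    change g ∈ Algebra.adjoin ℝ (range coord ∪ range coord) at hg
    rw [union_self, ← Subalgebra.mem_toSubmodule, Algebra.adjoin_eq_span] at hg
    induction hg using Submodule.span_induction with
    | mem g hg =>
      obtain ⟨l, hl⟩ := hmonomial g hg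
      simpa only [hl] using h l
    | zero => simp
    | add g₁ g₂ _ _ ih₁ ih₂ =>
      simp only [BoundedContinuousFunction.coe_add, Pi.add_apply]
      rw [integral_add (g₁.integrable μ) (g₂.integrable μ),
        integral_add (g₁.integrable ν) (g₂.integrable ν), ih₁, ih₂]
    | smul r g _ ih =>
      simp only [BoundedContinuousFunction.coe_smul, smul_eq_mul]
      rw [integral_const_mul, integral_const_mul, ih]

section Paths

variable {V : Type*} {E : Finset (V × V)} {x y z o : V}

-- A walk from `x` to `y` is encoded by the list of vertices it visits after `x`.
def IsWalk (E : Finset (V × V)) (x y : V) (w : List V) : Prop :=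
  IsPathIn E (x :: w) ∧ (x :: w).getLast (List.cons_ne_nil x w) = y

abbrev Loop (E : Finset (V × V)) (o : V) : Type _ := {w : List V // IsWalk E o o w}

theorem isWalk_nil (x : V) : IsWalk E x x [] := ⟨trivial, rfl⟩

theorem isWalk_singleton (h : (x, y) ∈ E) : IsWalk E x y [y] := ⟨⟨h, trivial⟩, rfl⟩

theorem IsWalk.append {w₁ w₂ : List V} (h₁ : IsWalk E x y w₁) (h₂ : IsWalk E y z w₂) :
    IsWalk E x z (w₁ ++ w₂) := by
  induction w₁ generalizing x with
  | nil =>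
    obtain rfl : x = y := h₁.2
    exact h₂
  | cons b w₁ ih =>
    have hb := ih ⟨h₁.1.2, h₁.2⟩
    exact ⟨⟨h₁.1.1, hb.1⟩, hb.2⟩

theorem IsWalk.induction_on_edges {C : V → Prop} (hstep : ∀ u v, (u, v) ∈ E → C u → C v)
    {w : List V} (hw : IsWalk E x y w) (hx : C x) : C y := by
  induction w generalizing x with
  | nil =>
    obtain rfl : x = y := hw.2
    exact hx
  | cons b w ih => exact ih ⟨hw.1.2, hw.2⟩ (hstep x b hw.1.1 hx)

theorem StronglyConnected.exists_isWalk (hconn : StronglyConnected E) (x y : V) :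
    ∃ w, IsWalk E x y w := by
  obtain ⟨_ | ⟨a, w⟩, hγ, hhead, hlast⟩ := hconn x y
  · simp at hhead
  · obtain rfl : a = x := by simpa using hhead
    exact ⟨w, hγ, by simpa [List.getLast?_eq_some_getLast] using hlast⟩

theorem isWalk_flatten {L : List (List V)} (hL : ∀ w ∈ L, IsWalk E o o w) :
    IsWalk E o o L.flatten := by
  induction L with
  | nil => exact isWalk_nil o
  | cons w L ih =>
    exact (hL w (by simp)).append (ih fun w' hw' => hL w' (by simp [hw']))

theorem pathProb_cons_append (p : V → V → ℝ) {w₁ : List V}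
    (h : (x :: w₁).getLast (List.cons_ne_nil x w₁) = y) (w₂ : List V) :
    pathProb p (x :: (w₁ ++ w₂)) = pathProb p (x :: w₁) * pathProb p (y :: w₂) := by
  induction w₁ generalizing x with
  | nil =>
    obtain rfl : x = y := h
    simp [pathProb]
  | cons b w₁ ih =>
    simp only [List.cons_append, pathProb, ih h, mul_assoc]

theorem pathProb_cons_flatten (p : V → V → ℝ) {L : List (List V)}
    (hL : ∀ w ∈ L, (o :: w).getLast (List.cons_ne_nil o w) = o) :
    pathProb p (o :: L.flatten) = (L.map fun w => pathProb p (o :: w)).prod := by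
  induction L with
  | nil => rfl
  | cons w L ih =>
    rw [List.flatten_cons, pathProb_cons_append p (hL w (by simp)),
      ih fun w' hw' => hL w' (by simp [hw']), List.map_cons, List.prod_cons]

theorem continuous_pathProb (γ : List V) :
    Continuous fun q : V → V → ℝ => pathProb q γ := by
  induction γ with
  | nil => exact continuous_const
  | cons a t ih =>
    cases t with
    | nil => exact continuous_const
    | cons b t => exact (continuous_apply_apply a b).mul ih

end Paths

section ValidEnv

variable {V : Type*} [Fintype V] {E : Finset (V × V)} {p p' : V → V → ℝ}

theorem ValidEnv.nonneg (hp : ValidEnv E p) (x y : V) : 0 ≤ p x y := by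
  by_cases h : (x, y) ∈ E
  · exact ((hp.1 x y).2 h).le
  · exact (hp.2.1 x y h).ge

theorem ValidEnv.le_one (hp : ValidEnv E p) (x y : V) : p x y ≤ 1 :=
  hp.2.2 x ▸ Finset.single_le_sum (fun z _ => hp.nonneg x z) (Finset.mem_univ y)

theorem ValidEnv.pathProb_pos (hp : ValidEnv E p) {γ : List V} (hγ : IsPathIn E γ) :
    0 < pathProb p γ := by
  induction γ with
  | nil => exact one_pos
  | cons a t ih =>
    cases t with
    | nil => exact one_pos
    | cons b t => exact mul_pos ((hp.1 a b).2 hγ.1) (ih hγ.2)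

theorem ValidEnv.pathProb_mem_unitInterval (hp : ValidEnv E p) (γ : List V) :
    pathProb p γ ∈ I := by
  induction γ with
  | nil => exact unitInterval.one_mem
  | cons a t ih =>
    cases t with
    | nil => exact unitInterval.one_mem
    | cons b t => exact unitInterval.mul_mem ⟨hp.nonneg a b, hp.le_one a b⟩ ih

theorem ValidEnv.eq_of_harmonic (hconn : StronglyConnected E) (hp : ValidEnv E p)
    {t : V → ℝ} (ht : ∀ x, ∑ y, p x y * t y = t x) (x y : V) : t x = t y := by
  obtain ⟨m, -, hm⟩ := Finset.exists_max_image Finset.univ t ⟨x, Finset.mem_univ x⟩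
  -- maximum principle: the set where `t` attains its maximum is closed under edges
  have hstep : ∀ u v, (u, v) ∈ E → t u = t m → t v = t m := by
    intro u v huv hu
    have hsum : ∑ z, p u z * (t m - t z) = 0 := by
      simp only [mul_sub, Finset.sum_sub_distrib, ← Finset.sum_mul, hp.2.2 u, ht u, hu]
      ring
    have hv := (Finset.sum_eq_zero_iff_of_nonneg fun z _ =>
      mul_nonneg (hp.nonneg u z) (sub_nonneg.2 (hm z (Finset.mem_univ z)))).1 hsum v
      (Finset.mem_univ v)
    linarith [(mul_eq_zero.1 hv).resolve_left ((hp.1 u v).2 huv).ne']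
  have hmax : ∀ z, t z = t m := fun z =>
    (hconn.exists_isWalk m z).choose_spec.induction_on_edges (C := (t · = t m)) hstep rfl
  rw [hmax x, hmax y]

theorem ValidEnv.eq_of_mul_eq_mul (hconn : StronglyConnected E) (hp : ValidEnv E p)
    (hp' : ValidEnv E p') {t : V → ℝ} (ht : ∀ x, t x ≠ 0)
    (h : ∀ x y, p x y * t y = t x * p' x y) : p = p' := by
  have hconst := hp.eq_of_harmonic hconn (t := t) fun x => by
    simp only [h, ← Finset.mul_sum, hp'.2.2 x, mul_one]
  funext x y
  have hxy := h x y
  rw [hconst y x] at hxy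
  exact mul_right_cancel₀ (ht x) (hxy.trans (mul_comm _ _))

theorem ValidEnv.eq_of_pathProb_loop_eq (hconn : StronglyConnected E) (hp : ValidEnv E p)
    (hp' : ValidEnv E p') (o : V)
    (h : ∀ w, IsWalk E o o w → pathProb p (o :: w) = pathProb p' (o :: w)) : p = p' := by
  choose out hout using hconn.exists_isWalk o
  choose back hback using fun x => hconn.exists_isWalk x o
  set a : (V → V → ℝ) → V → ℝ := fun q x => pathProb q (o :: out x)
  set b : (V → V → ℝ) → V → ℝ := fun q x => pathProb q (x :: back x)
  have hpos : ∀ {q}, ValidEnv E q → ∀ x, 0 < a q x ∧ 0 < b q x := fun hq x =>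
    ⟨hq.pathProb_pos (hout x).1, hq.pathProb_pos (hback x).1⟩
  have hvertex : ∀ x, a p x * b p x = a p' x * b p' x := by
    intro x
    have := h _ ((hout x).append (hback x))
    rwa [pathProb_cons_append p (hout x).2, pathProb_cons_append p' (hout x).2] at this
  have hedge : ∀ x y, (x, y) ∈ E →
      a p x * (p x y * b p y) = a p' x * (p' x y * b p' y) := by
    intro x y hxy
    have := h _ ((hout x).append ((isWalk_singleton hxy).append (hback y)))
    rwa [pathProb_cons_append p (hout x).2, pathProb_cons_append p' (hout x).2] at this
  -- the vertex and edge loops say that `p'` is the Doob transform of `p` by `b p / b p'`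
  refine hp.eq_of_mul_eq_mul hconn hp' (t := fun x => b p x / b p' x)
    (fun x => (div_pos (hpos hp x).2 (hpos hp' x).2).ne') fun x y => ?_
  by_cases hxy : (x, y) ∈ E
  · have hax := (hpos hp x).1.ne'
    have hbx := (hpos hp' x).2.ne'
    have hby := (hpos hp' y).2.ne'
    field_simp
    refine mul_left_cancel₀ hax ?_
    linear_combination (b p' x) * hedge x y hxy - (p' x y * b p' y) * hvertex x
  · simp [hp.2.1 x y hxy, hp'.2.1 x y hxy]

end ValidEnv

section LoopProbs

variable {V : Type*} {E : Finset (V × V)} {o : V} {q : V → V → ℝ}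

-- Truncated to `[0, 1]` so as to land in a compact space; on valid environments nothing is cut.
noncomputable def loopProbs (E : Finset (V × V)) (o : V) (q : V → V → ℝ) : Loop E o → I :=
  fun w => projIcc 0 1 zero_le_one (pathProb q (o :: w.1))

theorem continuous_loopProbs : Continuous (loopProbs E o) :=
  continuous_pi fun w => continuous_projIcc.comp (continuous_pathProb (o :: w.1))

theorem ValidEnv.coe_loopProbs [Fintype V] (hq : ValidEnv E q) (w : Loop E o) :
    (loopProbs E o q w : ℝ) = pathProb q (o :: w.1) := by
  simp only [loopProbs, projIcc_of_mem _ (hq.pathProb_mem_unitInterval _)]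

theorem injOn_loopProbs [Fintype V] (hconn : StronglyConnected E) (o : V) :
    InjOn (loopProbs E o) {q | ValidEnv E q} := fun _ hq _ hq' hqq' =>
  hq.eq_of_pathProb_loop_eq hconn hq' o fun w hw => by
    rw [← hq.coe_loopProbs ⟨w, hw⟩, ← hq'.coe_loopProbs ⟨w, hw⟩, hqq']

theorem ValidEnv.list_prod_loopProbs [Fintype V] (hq : ValidEnv E q)
    (l : List (Loop E o)) :
    (l.map fun w => (loopProbs E o q w : ℝ)).prod = pathProb q (o :: (l.map (·.1)).flatten) := by
  rw [pathProb_cons_flatten q fun _ hw => ?_, List.map_map]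
  · exact congrArg List.prod (List.map_congr_left fun w _ => hq.coe_loopProbs w)
  obtain ⟨w, -, rfl⟩ := List.mem_map.1 hw
  exact w.2.2

theorem integral_list_prod_map_loopProbs [Fintype V] {P : Measure (V → V → ℝ)}
    (hP : ∀ᵐ q ∂P, ValidEnv E q) (l : List (Loop E o)) :
    ∫ z, (l.map fun w => (z w : ℝ)).prod ∂(P.map (loopProbs E o)) =
      ∫ q, pathProb q (o :: (l.map (·.1)).flatten) ∂P := by
  have hmonomial : Continuous fun z : Loop E o → I =>
      (l.map fun w => (z w : ℝ)).prod :=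
    continuous_list_prod l fun w _ => continuous_subtype_val.comp (continuous_apply w)
  rw [integral_map continuous_loopProbs.aemeasurable hmonomial.aestronglyMeasurable]
  exact integral_congr_ae (hP.mono fun q hq => hq.list_prod_loopProbs l)

end LoopProbs

/-- the annealed path probabilities determine the law of the environment. -/
theorem stmt_6 {V : Type*} [Fintype V]
    (E : Finset (V × V)) (hconn : StronglyConnected E)
    (P P' : Measure (V → V → ℝ))
    (hP : IsProbabilityMeasure P) (hP' : IsProbabilityMeasure P')
    (hPsupp : ∀ᵐ p ∂P, ValidEnv E p) (hP'supp : ∀ᵐ p ∂P', ValidEnv E p)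
    (h : ∀ γ : List V, IsPathIn E γ →
      ∫ p, pathProb p γ ∂P = ∫ p, pathProb p γ ∂P') :
    P = P' := by
  rcases isEmpty_or_nonempty V with _ | ⟨⟨o⟩⟩
  · ext s -
    rcases s.eq_empty_or_nonempty with rfl | ⟨q, hq⟩
    · simp
    · obtain rfl : s = univ := eq_univ_of_forall fun q' => Subsingleton.elim q q' ▸ hq
      rw [measure_univ, measure_univ]
  refine Measure.ext_of_map_eq_of_injOn continuous_loopProbs.measurable
    (injOn_loopProbs hconn o) hPsupp hP'supp
    (ext_of_forall_integral_list_prod_eq fun l => ?_)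
  rw [integral_list_prod_map_loopProbs hPsupp, integral_list_prod_map_loopProbs hP'supp]
  refine h _ (isWalk_flatten fun _ hw => ?_).1
  obtain ⟨w, -, rfl⟩ := List.mem_map.1 hw
  exact w.2
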